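/- Let α ≥ 0 and let b : ℝ × ℝ → ℝ be smooth with b(r,λ) > 0, and write primes for ∂/∂r. Suppose at a point (r_a, λ₀) we have b′(r_a,λ₀) = 0 and 0 ≤ b″(r_a,λ₀) < 1, and that b satisfies the RG-2 angular evolution equation ∂_λ b = −2(1 − b″/2) − (α/2)(8b² − 2(b″)²b²) at this point. Then the area A := 4πb of the sphere at r = r_a satisfies ∂_λ A(r_a,λ₀) < −4π(1 + α·b(r_a,λ₀)²); in particular, the area of an apparent horizon strictly decreases under the RG-2 flow. -/

import Mathlib

/-- The radial partial derivative `∂g/∂r` of a function `g(r,λ)` of two variables. -/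
noncomputable def dr (g : ℝ → ℝ → ℝ) (r l : ℝ) : ℝ := deriv (fun s => g s l) r

/-- At an apparent horizon (`b′ = 0`, `0 ≤ b″ < 1`), the RG-2 angular evolution
`∂_λ b = −2(1 − b″/2) − (α/2)(8b² − 2b″²b²)` forces the horizon area `A = 4πb`
to satisfy `∂_λ A < −4π(1 + αb²)`: the area of an apparent horizon strictly
decreases under the RG-2 flow (Proposition 3.2 of the paper). -/
theorem rg2_apparent_horizon_area_decreases
    (α : ℝ) (hα : 0 ≤ α) (b : ℝ → ℝ → ℝ)
    (hb : ContDiff ℝ (⊤ : ℕ∞) (Function.uncurry b))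
    (hbpos : ∀ r l, 0 < b r l)
    (ra l₀ : ℝ)
    (h1 : dr b ra l₀ = 0)
    (h2 : 0 ≤ dr (dr b) ra l₀) (h2' : dr (dr b) ra l₀ < 1)
    (hflow : deriv (fun t => b ra t) l₀
      = -2 * (1 - dr (dr b) ra l₀ / 2)
        - (α / 2) * (8 * (b ra l₀) ^ 2 - 2 * (dr (dr b) ra l₀) ^ 2 * (b ra l₀) ^ 2)) :
    deriv (fun t => 4 * Real.pi * b ra t) l₀
      < -(4 * Real.pi) * (1 + α * (b ra l₀) ^ 2) := by
  have hd : DifferentiableAt ℝ (fun t => b ra t) l₀ := by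
    have h : Differentiable ℝ (Function.uncurry b) := hb.differentiable (by simp)
    exact (h.comp ((differentiable_const ra).prodMk differentiable_id)).differentiableAt
  have hr : deriv (fun t => 4 * Real.pi * b ra t) l₀
      = 4 * Real.pi * deriv (fun t => b ra t) l₀ := deriv_const_mul _ hd
  rw [hr, hflow]
  have hpi : (0:ℝ) < Real.pi := Real.pi_pos
  have hb2 : 0 < (b ra l₀)^2 := pow_pos (hbpos ra l₀) 2
  have hk2 : (dr (dr b) ra l₀)^2 ≤ 1 := by nlinarith
  nlinarith [mul_pos hpi (sub_pos.mpr h2'),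
    mul_nonneg (mul_nonneg hpi.le (mul_nonneg hα hb2.le)) (by nlinarith : (0:ℝ) ≤ 3 - (dr (dr b) ra l₀)^2)]
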